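/- arXiv:1909.09658 — 2 statements merged into one kernel-verified Lean document; each statement's English description precedes it below -/
import Mathlib

section
/- Let P be a finite poset and let v₁, …, v_k be pairwise incomparable elements of P. Then for each 1 ≤ i ≤ k, the composition τ*_{v₁} ∘ τ*_{v₂} ∘ ⋯ ∘ τ*_{v_i} equals η_{{v₁,…,v_i}} ∘ T_{v₁} ∘ T_{v₂} ∘ ⋯ ∘ T_{v_i} ∘ η_{{v₁,…,v_i}}⁻¹, on all S-labelings for which both sides are defined (i.e., every element inverted in the computation is nonzero). -/
/-!
Noncommutative (skew field) antichain/order toggling and rowmotion on a finite poset `P`,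
with labels in a division ring `S` and a fixed central element `C`, following
Joseph–Roby, "Birational and noncommutative lifts of antichain toggling and rowmotion".
All maps are partial; definedness ("every element inverted in the computation is
nonzero") is recorded by explicit predicates.
-/

open Finset

attribute [local instance] Classical.propDecidable

variable {P : Type*} [Fintype P] [PartialOrder P] {S : Type*} [DivisionRing S]

/-- `c` is a saturated chain in `P`: consecutive entries are covers. -/
def SatChain {P : Type*} [PartialOrder P] {k : ℕ} (c : Fin (k + 1) → P) : Prop :=
  ∀ i : Fin k, c i.castSucc ⋖ c i.succ

/-- `c` is a maximal chain of `P`: a saturated chain from a minimal element to a maximal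
element of `P` (equivalently, the restriction to `P` of a maximal chain
`0̂ ⋖ y₁ ⋖ ⋯ ⋖ y_k ⋖ 1̂` of `P̂`). -/
def MaxChain {P : Type*} [PartialOrder P] {k : ℕ} (c : Fin (k + 1) → P) : Prop :=
  SatChain c ∧ IsMin (c 0) ∧ IsMax (c (Fin.last k))

/-- `∑_{u ∈ P̂, u ⋖ v} f(u)`, with the convention `f(0̂) = 1`. -/
noncomputable def lSum (f : P → S) (v : P) : S :=
  (if IsMin v then 1 else 0) + ∑ u ∈ univ.filter (fun u => u ⋖ v), f u

/-- `∑_{u ∈ P̂, u ⋗ v} f(u)⁻¹`, with the convention `f(1̂) = C`; its inverse is the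
parallel sum `⫲_{u ∈ P̂, u ⋗ v} f(u)` (where `x ⫲ y = (x⁻¹ + y⁻¹)⁻¹`). -/
noncomputable def uInvSum (C : S) (f : P → S) (v : P) : S :=
  (if IsMax v then C⁻¹ else 0) + ∑ u ∈ univ.filter (fun u => v ⋖ u), (f u)⁻¹

/-- The noncommutative order toggle `T_v`: it replaces the label at `v` by
`(∑_{u ∈ P̂, u ⋖ v} f(u)) · f(v)⁻¹ · (⫲_{u ∈ P̂, u ⋗ v} f(u))` and fixes all other
labels. -/
noncomputable def ncT (C : S) (v : P) (f : P → S) : P → S :=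
  fun x => if x = v then lSum f v * (f v)⁻¹ * (uInvSum C f v)⁻¹ else f x

/-- The noncommutative order elggot `E_v`: it replaces the label at `v` by
`(⫲_{u ∈ P̂, u ⋗ v} f(u)) · f(v)⁻¹ · (∑_{u ∈ P̂, u ⋖ v} f(u))` and fixes all other
labels. -/
noncomputable def ncE (C : S) (v : P) (f : P → S) : P → S :=
  fun x => if x = v then (uInvSum C f v)⁻¹ * (f v)⁻¹ * lSum f v else f x

/-- Definedness of one application of `T_v` or `E_v` to `f`: every element inverted in
the computation (the label `f(v)`, the labels `f(u)` of the upper covers `u` of `v` in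
`P̂`, and the sum of their inverses) is nonzero. -/
def ncODef (C : S) (v : P) (f : P → S) : Prop :=
  f v ≠ 0 ∧ (∀ u : P, v ⋖ u → f u ≠ 0) ∧ (IsMax v → C ≠ 0) ∧ uInvSum C f v ≠ 0

/-- The element `∑ g(y_{c-1})⋯g(y₁) · g(y_k)⋯g(y_c)` inverted by the noncommutative
antichain toggle `τ_v`, summed over all maximal chains `0̂ ⋖ y₁ ⋖ ⋯ ⋖ y_k ⋖ 1̂` of `P̂`
with `y_c = v` (indices decrease by 1 within each factor). -/
noncomputable def tauDenom (g : P → S) (v : P) : S :=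
  ∑ k ∈ range (Fintype.card P),
    ∑ c ∈ univ.filter (fun c : Fin (k + 1) → P => MaxChain c),
      ∑ j ∈ univ.filter (fun j : Fin (k + 1) => c j = v),
        (((List.ofFn (g ∘ c)).take j.1).reverse).prod *
          (((List.ofFn (g ∘ c)).drop j.1).reverse).prod

/-- The element `∑ g(y_c)⋯g(y₁) · g(y_k)⋯g(y_{c+1})` inverted by the noncommutative
antichain elggot `ε_v`, summed over all maximal chains `0̂ ⋖ y₁ ⋖ ⋯ ⋖ y_k ⋖ 1̂` of `P̂`
with `y_c = v`. -/
noncomputable def epsDenom (g : P → S) (v : P) : S :=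
  ∑ k ∈ range (Fintype.card P),
    ∑ c ∈ univ.filter (fun c : Fin (k + 1) → P => MaxChain c),
      ∑ j ∈ univ.filter (fun j : Fin (k + 1) => c j = v),
        (((List.ofFn (g ∘ c)).take (j.1 + 1)).reverse).prod *
          (((List.ofFn (g ∘ c)).drop (j.1 + 1)).reverse).prod

/-- The noncommutative antichain toggle `τ_v`: it replaces the label at `v` by
`C · (∑ g(y_{c-1})⋯g(y₁) · g(y_k)⋯g(y_c))⁻¹` and fixes all other labels. -/
noncomputable def ncTau (C : S) (v : P) (g : P → S) : P → S :=
  fun x => if x = v then C * (tauDenom g v)⁻¹ else g x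

/-- The noncommutative antichain elggot `ε_v`: it replaces the label at `v` by
`C · (∑ g(y_c)⋯g(y₁) · g(y_k)⋯g(y_{c+1}))⁻¹` and fixes all other labels. -/
noncomputable def ncEps (C : S) (v : P) (g : P → S) : P → S :=
  fun x => if x = v then C * (epsDenom g v)⁻¹ else g x

/-- The noncommutative complement `Θ`: `(Θf)(x) = C · f(x)⁻¹`. -/
noncomputable def ncTheta (C : S) (f : P → S) : P → S := fun x => C * (f x)⁻¹

/-- The noncommutative down transfer `∇`:
`(∇f)(x) = f(x) · (∑_{y ∈ P̂, y ⋖ x} f(y))⁻¹` with `f(0̂) = 1`. -/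
noncomputable def ncNabla (f : P → S) : P → S := fun x => f x * (lSum f x)⁻¹

/-- The noncommutative inverse up transfer `Δ⁻¹`:
`(Δ⁻¹f)(x) = ∑ f(y_k)⋯f(y₂)f(y₁)` over all saturated chains
`x = y₁ ⋖ y₂ ⋖ ⋯ ⋖ y_k ⋖ 1̂` in `P̂`. -/
noncomputable def ncDeltaInv (f : P → S) : P → S := fun x =>
  ∑ k ∈ range (Fintype.card P),
    ∑ c ∈ univ.filter (fun c : Fin (k + 1) → P =>
        SatChain c ∧ c 0 = x ∧ IsMax (c (Fin.last k))),
      ((List.ofFn (f ∘ c)).reverse).prod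

/-- The noncommutative inverse down transfer `∇⁻¹`:
`(∇⁻¹f)(x) = ∑ f(y_k)⋯f(y₂)f(y₁)` over all saturated chains
`0̂ ⋖ y₁ ⋖ y₂ ⋖ ⋯ ⋖ y_k = x` in `P̂`. -/
noncomputable def ncNablaInv (f : P → S) : P → S := fun x =>
  ∑ k ∈ range (Fintype.card P),
    ∑ c ∈ univ.filter (fun c : Fin (k + 1) → P =>
        SatChain c ∧ IsMin (c 0) ∧ c (Fin.last k) = x),
      ((List.ofFn (f ∘ c)).reverse).prod

/-- `l` is a linear extension of `P`: it lists every element of `P` exactly once, and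
`l[i] < l[j]` in `P` implies `i < j`. -/
def IsLinearExtension {P : Type*} [PartialOrder P] (l : List P) : Prop :=
  l.Nodup ∧ (∀ x : P, x ∈ l) ∧
    ∀ (i j : ℕ) (hi : i < l.length) (hj : j < l.length), l[i]'hi < l[j]'hj → i < j

/-- `l` is a linear extension of the subposet `A` of `P`. -/
def IsLinearExtensionOn {P : Type*} [PartialOrder P] (A : Set P) (l : List P) : Prop :=
  l.Nodup ∧ (∀ x : P, x ∈ l ↔ x ∈ A) ∧
    ∀ (i j : ℕ) (hi : i < l.length) (hj : j < l.length), l[i]'hi < l[j]'hj → i < j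

/-- An order toggle (`T`) or order elggot (`E`) operation. -/
inductive OOp (P : Type*) where
  | T : P → OOp P
  | E : P → OOp P

/-- The poset element at which an operation acts. -/
def OOp.el {P : Type*} : OOp P → P
  | .T v => v
  | .E v => v

/-- Apply one order toggle/elggot operation. -/
noncomputable def applyOOp (C : S) : OOp P → (P → S) → (P → S)
  | .T v => ncT C v
  | .E v => ncE C v

/-- Apply a sequence of order toggle/elggot operations, first element of the list
applied first. -/
noncomputable def applyOOps (C : S) (l : List (OOp P)) (f : P → S) : P → S :=
  l.foldl (fun h o => applyOOp C o h) f

/-- Stepwise definedness of applying a sequence of order toggle/elggot operations: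
every element inverted in the computation is nonzero. -/
def OOpsDef (C : S) : List (OOp P) → (P → S) → Prop
  | [], _ => True
  | o :: l, f => ncODef C o.el f ∧ OOpsDef C l (applyOOp C o f)

/-- The sequence of operations realizing `τ_v* = η_v ∘ T_v ∘ η_v⁻¹`, listed in order of
application: first `η_v⁻¹ = E_{x_k} ∘ ⋯ ∘ E_{x₁}` (so `E_{x₁}` first), then `T_v`, then
`η_v = T_{x₁} ∘ ⋯ ∘ T_{x_k}` (so `T_{x_k}` first), where `le = (x₁,…,x_k)` is a linear
extension of `{x ∈ P : x < v}`. -/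
def tauStarOps {P : Type*} (v : P) (le : List P) : List (OOp P) :=
  le.map OOp.E ++ [OOp.T v] ++ (le.reverse).map OOp.T

/-- The sequence of operations realizing `ε_v* = η_v ∘ E_v ∘ η_v⁻¹`, listed in order of
application. -/
def epsStarOps {P : Type*} (v : P) (le : List P) : List (OOp P) :=
  le.map OOp.E ++ [OOp.E v] ++ (le.reverse).map OOp.T

/-!
Toggles at incomparable elements commute, and `E_v` undoes `T_v`; both facts hold on every
labeling on which the left-hand composite is defined, so rewriting an operation sequence by
such swaps and cancellations preserves definedness and the result. Any two linear extensions
of a set differ by swaps of adjacent incomparable elements, so `η_X` does not depend on the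
chosen extension. Adding one element `v` to an antichain `W`, split the downset of `v` into
its part `U` shared with the downset of `W` and the rest: in `τ*_v ∘ η_W ∘ T_W ∘ η_W⁻¹` the
factor `η_U⁻¹ ∘ η_U` cancels, and the remaining toggles commute into the form
`η_{W ∪ {v}} ∘ T_v ∘ T_W ∘ η_{W ∪ {v}}⁻¹`.
-/

section Toggles

variable {C : S}

lemma ncT_self (v : P) (f : P → S) :
    ncT C v f v = lSum f v * (f v)⁻¹ * (uInvSum C f v)⁻¹ := if_pos rfl

lemma ncE_self (v : P) (f : P → S) :
    ncE C v f v = (uInvSum C f v)⁻¹ * (f v)⁻¹ * lSum f v := if_pos rfl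

lemma lSum_congr {f g : P → S} {v : P} (h : ∀ u, u ⋖ v → f u = g u) :
    lSum f v = lSum g v := by
  unfold lSum
  rw [sum_congr rfl fun u hu => h u (mem_filter.1 hu).2]

lemma uInvSum_congr {f g : P → S} {v : P} (h : ∀ u, v ⋖ u → f u = g u) :
    uInvSum C f v = uInvSum C g v := by
  unfold uInvSum
  rw [sum_congr rfl fun u hu => by rw [h u (mem_filter.1 hu).2]]

lemma ncODef_congr {v : P} {f g : P → S} (h₀ : f v = g v) (h : ∀ u, v ⋖ u → f u = g u) :
    ncODef C v f ↔ ncODef C v g := by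
  unfold ncODef
  rw [h₀, uInvSum_congr h]
  exact and_congr_right' (and_congr_left' (forall₂_congr fun u hu => by rw [h u hu]))

lemma applyOOp_of_ne (o : OOp P) (f : P → S) {x : P} (h : x ≠ o.el) :
    applyOOp C o f x = f x := by
  cases o <;> exact if_neg h

lemma applyOOp_el_congr (o : OOp P) {f g : P → S} (h₀ : f o.el = g o.el)
    (hl : ∀ u, u ⋖ o.el → f u = g u) (hu : ∀ u, o.el ⋖ u → f u = g u) :
    applyOOp C o f o.el = applyOOp C o g o.el := by
  cases o <;> simp only [applyOOp, ncT, ncE, OOp.el, if_pos] at * <;>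
    rw [lSum_congr hl, uInvSum_congr hu, h₀]

lemma ncODef_applyOOp_iff {v : P} (o : OOp P) (f : P → S) (hne : o.el ≠ v)
    (hcov : ¬ v ⋖ o.el) : ncODef C v (applyOOp C o f) ↔ ncODef C v f :=
  ncODef_congr (applyOOp_of_ne o f hne.symm)
    fun _ hu => applyOOp_of_ne o f fun e => hcov (e ▸ hu)

lemma applyOOp_comm {a b : OOp P} (hne : a.el ≠ b.el) (hab : ¬ a.el ⋖ b.el)
    (hba : ¬ b.el ⋖ a.el) (f : P → S) :
    applyOOp C a (applyOOp C b f) = applyOOp C b (applyOOp C a f) := by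
  funext x
  by_cases hxa : x = a.el
  · subst hxa
    rw [applyOOp_of_ne b _ hne, applyOOp_el_congr a (applyOOp_of_ne b f hne)
      (fun u hu => applyOOp_of_ne b f fun e => hba (e ▸ hu))
      (fun u hu => applyOOp_of_ne b f fun e => hab (e ▸ hu))]
  by_cases hxb : x = b.el
  · subst hxb
    rw [applyOOp_of_ne a _ hne.symm, applyOOp_el_congr b (applyOOp_of_ne a f hne.symm).symm
      (fun u hu => (applyOOp_of_ne a f fun e => hab (e ▸ hu)).symm)
      (fun u hu => (applyOOp_of_ne a f fun e => hba (e ▸ hu)).symm)]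
  rw [applyOOp_of_ne a _ hxa, applyOOp_of_ne b _ hxb, applyOOp_of_ne b _ hxb,
    applyOOp_of_ne a _ hxa]

/-- A nonzero toggled label forces every factor of its formula to be nonzero, which is all
`E_v` needs to undo `T_v`. -/
lemma ncE_ncT {v : P} {f : P → S} (h : ncT C v f v ≠ 0) : ncE C v (ncT C v f) = f := by
  have hlow : lSum (ncT C v f) v = lSum f v :=
    lSum_congr fun u hu => if_neg hu.ne
  have hup : uInvSum C (ncT C v f) v = uInvSum C f v :=
    uInvSum_congr fun u hu => if_neg hu.ne'
  rw [ncT_self] at h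
  have hU : uInvSum C f v ≠ 0 := fun h₀ => h (by rw [h₀, inv_zero, mul_zero])
  have hL : lSum f v ≠ 0 := fun h₀ => h (by rw [h₀, zero_mul, zero_mul])
  funext x
  by_cases hx : x = v
  · subst hx
    rw [ncE_self, hlow, hup, ncT_self, mul_inv_rev, mul_inv_rev, inv_inv, inv_inv, ← mul_assoc,
      inv_mul_cancel₀ hU, one_mul, mul_assoc, inv_mul_cancel₀ hL, mul_one]
  · exact (if_neg hx).trans (if_neg hx)

end Toggles

/-- For a linear extension `l` of `{x : x < y for some y ∈ X}`, `etaInvOps l` and `etaOps l`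
are the operation sequences realizing `η_X⁻¹` and `η_X`, in order of application. -/
def etaInvOps {P : Type*} (l : List P) : List (OOp P) := l.map OOp.E

def etaOps {P : Type*} (l : List P) : List (OOp P) := l.reverse.map OOp.T

section Rewriting

omit [Fintype P]

inductive OOpStep : List (OOp P) → List (OOp P) → Prop
  | swap (c d : List (OOp P)) (a b : OOp P) (h : IncompRel (· ≤ ·) a.el b.el) :
      OOpStep (c ++ [a, b] ++ d) (c ++ [b, a] ++ d)
  | cancel (c d : List (OOp P)) (v : P) : OOpStep (c ++ [OOp.T v, OOp.E v] ++ d) (c ++ d)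

abbrev OOpRel : List (OOp P) → List (OOp P) → Prop := Relation.ReflTransGen OOpStep

lemma OOpStep.append (c d : List (OOp P)) {l l' : List (OOp P)} (h : OOpStep l l') :
    OOpStep (c ++ l ++ d) (c ++ l' ++ d) := by
  cases h with
  | swap c' d' a b h => simpa using OOpStep.swap (c ++ c') (d' ++ d) a b h
  | cancel c' d' v => simpa using OOpStep.cancel (c ++ c') (d' ++ d) v

lemma OOpRel.append_left (c : List (OOp P)) {l l' : List (OOp P)} (h : OOpRel l l') :
    OOpRel (c ++ l) (c ++ l') :=
  h.lift (c ++ ·) fun _ _ h => by simpa using h.append c []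

lemma OOpRel.append_right (d : List (OOp P)) {l l' : List (OOp P)} (h : OOpRel l l') :
    OOpRel (l ++ d) (l' ++ d) :=
  h.lift (· ++ d) fun _ _ h => by simpa using h.append [] d

lemma OOpRel.append {l₁ l₁' l₂ l₂' : List (OOp P)} (h₁ : OOpRel l₁ l₁') (h₂ : OOpRel l₂ l₂') :
    OOpRel (l₁ ++ l₂) (l₁' ++ l₂') :=
  Relation.ReflTransGen.trans (h₁.append_right l₂) (h₂.append_left l₁')

lemma OOpRel.append_comm {l₁ l₂ : List (OOp P)}
    (h : ∀ a ∈ l₁, ∀ b ∈ l₂, IncompRel (· ≤ ·) a.el b.el) : OOpRel (l₁ ++ l₂) (l₂ ++ l₁) := by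
  induction l₁ generalizing l₂ with
  | nil => simpa using .refl
  | cons a l₁ ih =>
    have past : OOpRel ([a] ++ l₂) (l₂ ++ [a]) := by
      clear ih
      induction l₂ with
      | nil => exact .refl
      | cons b l₂ ih₂ =>
        refine .head (by simpa using OOpStep.swap [] l₂ a b (h a (by simp) b (by simp))) ?_
        simpa using (ih₂ fun x hx y hy => h x hx y (List.mem_cons_of_mem b hy)).append_left [b]
    simpa using Relation.ReflTransGen.trans
      ((ih fun x hx y hy => h x (List.mem_cons_of_mem a hx) y hy).append_left [a])
      (past.append_right l₁)

lemma oOpRel_etaOps_append_etaInvOps (u : List P) : OOpRel (etaOps u ++ etaInvOps u) [] := by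
  induction u with
  | nil => exact .refl
  | cons x u ih =>
    exact .head (by simpa [etaOps, etaInvOps] using OOpStep.cancel (etaOps u) (etaInvOps u) x) ih

/-- The block `η_u η_u⁻¹` in the middle cancels, and what remains commutes into place. -/
lemma oOpRel_tauStarOps_append_conj {v : P} {u wl tl old : List P}
    (hwt : ∀ x ∈ wl, ∀ y ∈ tl, IncompRel (· ≤ ·) x y)
    (hvt : ∀ y ∈ tl, IncompRel (· ≤ ·) v y)
    (hwo : ∀ x ∈ wl, ∀ w ∈ old, IncompRel (· ≤ ·) x w) :
    OOpRel (tauStarOps v (u ++ wl) ++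
        (etaInvOps (u ++ tl) ++ old.map OOp.T ++ etaOps (u ++ tl)))
      (etaInvOps (u ++ wl ++ tl) ++ (v :: old).map OOp.T ++ etaOps (u ++ wl ++ tl)) := by
  have h₁ : OOpRel ([OOp.T v] ++ etaOps wl ++ etaInvOps tl)
      (etaInvOps tl ++ ([OOp.T v] ++ etaOps wl)) :=
    OOpRel.append_comm (by simpa [etaOps, etaInvOps, OOp.el] using ⟨hvt, hwt⟩)
  have h₂ : OOpRel (etaOps wl ++ (old.map OOp.T ++ etaOps tl))
      (old.map OOp.T ++ etaOps tl ++ etaOps wl) :=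
    OOpRel.append_comm fun a ha b hb => by
      simp only [etaOps, List.mem_map, List.mem_reverse, List.mem_append] at ha hb
      obtain ⟨x, hx, rfl⟩ := ha
      rcases hb with ⟨w, hw, rfl⟩ | ⟨y, hy, rfl⟩
      exacts [hwo x hx w hw, hwt x hx y hy]
  calc tauStarOps v (u ++ wl) ++ (etaInvOps (u ++ tl) ++ old.map OOp.T ++ etaOps (u ++ tl))
      = etaInvOps u ++ etaInvOps wl ++ ([OOp.T v] ++ etaOps wl) ++
          (etaOps u ++ etaInvOps u) ++
          (etaInvOps tl ++ old.map OOp.T ++ etaOps tl ++ etaOps u) := by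
        simp [tauStarOps, etaInvOps, etaOps]
    OOpRel _ (etaInvOps u ++ etaInvOps wl ++ ([OOp.T v] ++ etaOps wl) ++ [] ++
          (etaInvOps tl ++ old.map OOp.T ++ etaOps tl ++ etaOps u)) :=
        ((oOpRel_etaOps_append_etaInvOps u).append_left _).append_right _
    _ = etaInvOps u ++ etaInvOps wl ++ ([OOp.T v] ++ etaOps wl ++ etaInvOps tl) ++
          (old.map OOp.T ++ etaOps tl ++ etaOps u) := by simp
    OOpRel _ (etaInvOps u ++ etaInvOps wl ++ (etaInvOps tl ++ ([OOp.T v] ++ etaOps wl)) ++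
          (old.map OOp.T ++ etaOps tl ++ etaOps u)) :=
        (h₁.append_left _).append_right _
    _ = etaInvOps u ++ etaInvOps wl ++ etaInvOps tl ++ [OOp.T v] ++
          (etaOps wl ++ (old.map OOp.T ++ etaOps tl)) ++ etaOps u := by simp
    OOpRel _ (etaInvOps u ++ etaInvOps wl ++ etaInvOps tl ++ [OOp.T v] ++
          (old.map OOp.T ++ etaOps tl ++ etaOps wl) ++ etaOps u) :=
        (h₂.append_left _).append_right _
    _ = etaInvOps (u ++ wl ++ tl) ++ (v :: old).map OOp.T ++ etaOps (u ++ wl ++ tl) := by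
        simp [etaInvOps, etaOps]

end Rewriting

section Soundness

variable {C : S}

lemma applyOOps_append (l₁ l₂ : List (OOp P)) (f : P → S) :
    applyOOps C (l₁ ++ l₂) f = applyOOps C l₂ (applyOOps C l₁ f) :=
  List.foldl_append ..

lemma oOpsDef_append (l₁ l₂ : List (OOp P)) (f : P → S) :
    OOpsDef C (l₁ ++ l₂) f ↔ OOpsDef C l₁ f ∧ OOpsDef C l₂ (applyOOps C l₁ f) := by
  induction l₁ generalizing f with
  | nil => simp [OOpsDef, applyOOps]
  | cons o l₁ ih => simp only [List.cons_append, OOpsDef, ih, and_assoc]; rfl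

def IsSoundRewrite (C : S) (l l' : List (OOp P)) : Prop :=
  ∀ g : P → S, OOpsDef C l g → OOpsDef C l' g ∧ applyOOps C l' g = applyOOps C l g

lemma IsSoundRewrite.trans {l₁ l₂ l₃ : List (OOp P)} (h₁₂ : IsSoundRewrite C l₁ l₂)
    (h₂₃ : IsSoundRewrite C l₂ l₃) : IsSoundRewrite C l₁ l₃ := fun g hg =>
  have ⟨hg₂, he₂⟩ := h₁₂ g hg
  have ⟨hg₃, he₃⟩ := h₂₃ g hg₂
  ⟨hg₃, he₃.trans he₂⟩

lemma IsSoundRewrite.append {l l' : List (OOp P)} (h : IsSoundRewrite C l l')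
    (c d : List (OOp P)) : IsSoundRewrite C (c ++ l ++ d) (c ++ l' ++ d) := by
  intro g hg
  simp only [oOpsDef_append, applyOOps_append] at hg ⊢
  obtain ⟨⟨hc, hl⟩, hd⟩ := hg
  obtain ⟨hl', he⟩ := h _ hl
  rw [he]
  exact ⟨⟨⟨hc, hl'⟩, hd⟩, rfl⟩

lemma isSoundRewrite_swap {a b : OOp P} (h : IncompRel (· ≤ ·) a.el b.el) :
    IsSoundRewrite C [a, b] [b, a] := by
  have hne : a.el ≠ b.el := fun e => h.1 e.le
  have hab : ¬ a.el ⋖ b.el := fun hc => h.1 hc.le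
  have hba : ¬ b.el ⋖ a.el := fun hc => h.2 hc.le
  rintro g ⟨ha, hb, -⟩
  refine ⟨⟨(ncODef_applyOOp_iff a g hne hba).1 hb, (ncODef_applyOOp_iff b g hne.symm hab).2 ha,
    trivial⟩, ?_⟩
  exact applyOOp_comm hne hab hba g

lemma isSoundRewrite_cancel (v : P) : IsSoundRewrite C [OOp.T v, OOp.E v] [] :=
  fun _ ⟨_, hE, _⟩ => ⟨trivial, (ncE_ncT hE.1).symm⟩

lemma OOpStep.isSoundRewrite {l l' : List (OOp P)} (h : OOpStep l l') :
    IsSoundRewrite C l l' := by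
  cases h with
  | swap c d a b h => exact (isSoundRewrite_swap h).append c d
  | cancel c d v => simpa using (isSoundRewrite_cancel v).append c d

lemma OOpRel.isSoundRewrite {l l' : List (OOp P)} (h : OOpRel l l') :
    IsSoundRewrite C l l' := by
  induction h with
  | refl => exact fun g hg => ⟨hg, rfl⟩
  | tail _ hstep ih => exact ih.trans hstep.isSoundRewrite

end Soundness

section LinearExtension

omit [Fintype P]

lemma isLinearExtensionOn_iff_pairwise {A : Set P} {l : List P} :
    IsLinearExtensionOn A l ↔
      l.Nodup ∧ (∀ x, x ∈ l ↔ x ∈ A) ∧ l.Pairwise fun a b => ¬ b < a := by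
  refine and_congr_right fun _ => and_congr_right fun _ => ?_
  rw [List.pairwise_iff_getElem]
  refine ⟨fun H i j hi hj hij hlt => (H j i hj hi hlt).not_gt hij, fun H i j hi hj hlt => ?_⟩
  by_contra! hji
  rcases hji.lt_or_eq with hji | rfl
  · exact H j i hj hi hji hlt
  · exact hlt.false

lemma Set.Finite.exists_isLinearExtensionOn {A : Set P} (hA : A.Finite) :
    ∃ l : List P, IsLinearExtensionOn A l := by
  simp only [isLinearExtensionOn_iff_pairwise]
  suffices ∀ s : Finset P, ∃ l : List P, l.Nodup ∧ (∀ x, x ∈ l ↔ x ∈ s) ∧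
      l.Pairwise (fun a b => ¬ b < a) from
    (this hA.toFinset).imp fun l h => by simpa using h
  intro s
  induction s using Finset.induction_on_min_value (toLinearExtension : P → LinearExtension P) with
  | empty => exact ⟨[], by simp⟩
  | insert a s ha hmin ih =>
    obtain ⟨l, hnd, hmem, hpw⟩ := ih
    refine ⟨a :: l, List.nodup_cons.2 ⟨by rwa [hmem], hnd⟩, by simp [hmem], ?_⟩
    refine List.pairwise_cons.2 ⟨fun x hx hxa => ?_, hpw⟩
    exact hxa.ne (show toLinearExtension x = toLinearExtension a from
      le_antisymm (toLinearExtension.monotone hxa.le) (hmin x ((hmem x).1 hx)))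

lemma IsLinearExtensionOn.erase {A : Set P} {l : List P} (hl : IsLinearExtensionOn A l)
    (x : P) : IsLinearExtensionOn (A \ {x}) (l.erase x) := by
  rw [isLinearExtensionOn_iff_pairwise] at hl ⊢
  obtain ⟨hnd, hmem, hpw⟩ := hl
  exact ⟨hnd.erase x, fun y => by simp [hnd.mem_erase_iff, hmem, and_comm],
    hpw.sublist List.erase_sublist⟩

lemma IsLinearExtensionOn.append {A B : Set P} {la lb : List P}
    (ha : IsLinearExtensionOn A la) (hb : IsLinearExtensionOn B lb) (hAB : Disjoint A B)
    (hlt : ∀ a ∈ A, ∀ b ∈ B, ¬ b < a) : IsLinearExtensionOn (A ∪ B) (la ++ lb) := by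
  rw [isLinearExtensionOn_iff_pairwise] at ha hb ⊢
  obtain ⟨hnda, hmema, hpwa⟩ := ha
  obtain ⟨hndb, hmemb, hpwb⟩ := hb
  refine ⟨List.nodup_append.2 ⟨hnda, hndb, ?_⟩, fun x => by simp [hmema, hmemb],
    List.pairwise_append.2 ⟨hpwa, hpwb, ?_⟩⟩
  · rintro x hx y hy rfl
    exact hAB.notMem_of_mem_left ((hmema x).1 hx) ((hmemb x).1 hy)
  · exact fun a ha b hb => hlt a ((hmema a).1 ha) b ((hmemb b).1 hb)

/-- Two linear extensions of the same set differ by swaps of adjacent incomparable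
elements, so they give the same conjugation. -/
lemma IsLinearExtensionOn.oOpRel {A : Set P} {l l' : List P} (hl : IsLinearExtensionOn A l)
    (hl' : IsLinearExtensionOn A l') (X : List (OOp P)) :
    OOpRel (etaInvOps l ++ X ++ etaOps l) (etaInvOps l' ++ X ++ etaOps l') := by
  induction l' generalizing A l with
  | nil =>
    obtain rfl : l = [] := List.eq_nil_iff_forall_not_mem.2 fun x hx =>
      by simpa using (hl'.2.1 x).2 ((hl.2.1 x).1 hx)
    exact .refl
  | cons x t ih =>
    have hxl : x ∈ l := (hl.2.1 x).2 ((hl'.2.1 x).1 List.mem_cons_self)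
    obtain ⟨c, d, rfl⟩ := List.append_of_mem hxl
    obtain ⟨hnd, hmem, hpw⟩ := isLinearExtensionOn_iff_pairwise.1 hl
    have hxc : x ∉ c := fun hx => List.disjoint_of_nodup_append hnd hx List.mem_cons_self
    have hinc : ∀ y ∈ c, IncompRel (· ≤ ·) y x := by
      intro y hy
      have hyx : y ≠ x := fun e => hxc (e ▸ hy)
      have hyt : y ∈ t := by
        simpa [hyx] using (hl'.2.1 y).2 ((hmem y).1 (List.mem_append_left _ hy))
      refine ⟨fun h => ?_, fun h => ?_⟩
      · exact (List.pairwise_cons.1 (isLinearExtensionOn_iff_pairwise.1 hl').2.2).1 y hyt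
          (h.lt_of_ne hyx)
      · exact (List.pairwise_append.1 hpw).2.2 y hy x List.mem_cons_self (h.lt_of_ne hyx.symm)
    have hcd : IsLinearExtensionOn (A \ {x}) (c ++ d) := by
      simpa [List.erase_append_right _ hxc] using hl.erase x
    have hswap := ((OOpRel.append_comm (l₁ := etaInvOps c) (l₂ := [OOp.E x])
      (by simpa [etaInvOps, OOp.el] using hinc)).append_right
        (etaInvOps d ++ X ++ etaOps d)).append
      (OOpRel.append_comm (l₁ := [OOp.T x]) (l₂ := etaOps c)
        (by simpa [etaOps, OOp.el] using fun y hy => (hinc y hy).symm))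
    calc etaInvOps (c ++ x :: d) ++ X ++ etaOps (c ++ x :: d)
        = etaInvOps c ++ [OOp.E x] ++ (etaInvOps d ++ X ++ etaOps d) ++
            ([OOp.T x] ++ etaOps c) := by simp [etaInvOps, etaOps]
      OOpRel _ ([OOp.E x] ++ etaInvOps c ++ (etaInvOps d ++ X ++ etaOps d) ++
            (etaOps c ++ [OOp.T x])) := hswap
      _ = [OOp.E x] ++ (etaInvOps (c ++ d) ++ X ++ etaOps (c ++ d)) ++ [OOp.T x] := by
            simp [etaInvOps, etaOps]
      OOpRel _ ([OOp.E x] ++ (etaInvOps t ++ X ++ etaOps t) ++ [OOp.T x]) :=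
            ((ih hcd (by simpa using hl'.erase x)).append_left _).append_right _
      _ = etaInvOps (x :: t) ++ X ++ etaOps (x :: t) := by simp [etaInvOps, etaOps]

end LinearExtension

lemma exists_isLinearExtensionOn_union_split {A B : Set P} (hA : IsLowerSet A)
    (hB : IsLowerSet B) :
    ∃ u a b : List P, IsLinearExtensionOn (A \ B) a ∧ IsLinearExtensionOn (B \ A) b ∧
      IsLinearExtensionOn A (u ++ a) ∧ IsLinearExtensionOn B (u ++ b) ∧
      IsLinearExtensionOn (A ∪ B) (u ++ a ++ b) := by
  obtain ⟨u, hu⟩ := (A ∩ B).toFinite.exists_isLinearExtensionOn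
  obtain ⟨a, ha⟩ := (A \ B).toFinite.exists_isLinearExtensionOn
  obtain ⟨b, hb⟩ := (B \ A).toFinite.exists_isLinearExtensionOn
  have hua : IsLinearExtensionOn A (u ++ a) := by
    have := hu.append ha Set.disjoint_sdiff_inter.symm fun x hx y hy hyx =>
      hy.2 (hB hyx.le hx.2)
    rwa [Set.inter_union_sdiff] at this
  have hub : IsLinearExtensionOn B (u ++ b) := by
    have := hu.append hb (Set.disjoint_sdiff_right.mono_left Set.inter_subset_left)
      fun x hx y hy hyx => hy.2 (hA hyx.le hx.1)
    rwa [Set.inter_comm, Set.inter_union_sdiff] at this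
  have huab : IsLinearExtensionOn (A ∪ B) (u ++ a ++ b) := by
    have := hua.append hb Set.disjoint_sdiff_right fun x hx y hy hyx => hy.2 (hA hyx.le hx)
    rwa [Set.union_sdiff_self] at this
  exact ⟨u, a, b, ha, hb, hua, hub, huab⟩

lemma exists_isLinearExtensionOn_oOpRel_flatMap_tauStarOps (lev : P → List P)
    (hlev : ∀ w : P, IsLinearExtensionOn {x : P | x < w} (lev w)) (rs : List P)
    (hrs : rs.Pairwise (IncompRel (· ≤ ·))) :
    ∃ s : List P, IsLinearExtensionOn {x : P | ∃ w ∈ rs, x < w} s ∧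
      OOpRel (rs.flatMap fun w => tauStarOps w (lev w))
        (etaInvOps s ++ rs.map OOp.T ++ etaOps s) := by
  induction rs with
  | nil => exact ⟨[], by simp [isLinearExtensionOn_iff_pairwise], .refl⟩
  | cons v old ih =>
    obtain ⟨hv, hold⟩ := List.pairwise_cons.1 hrs
    obtain ⟨so, hso, hrel⟩ := ih hold
    obtain ⟨u, wl, tl, hwl, htl, hDv, hD, hS⟩ :=
      exists_isLinearExtensionOn_union_split (isLowerSet_Iio v)
        (B := {x | ∃ w ∈ old, x < w}) fun _ _ hyx ⟨w, hw, hxw⟩ => ⟨w, hw, hyx.trans_lt hxw⟩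
    have hwt : ∀ x ∈ wl, ∀ y ∈ tl, IncompRel (· ≤ ·) x y := by
      intro x hx y hy
      obtain ⟨hxv, hxD⟩ := (hwl.2.1 x).1 hx
      obtain ⟨⟨w, hw, hyw⟩, hyv⟩ := (htl.2.1 y).1 hy
      exact ⟨fun hxy => hxD ⟨w, hw, hxy.trans_lt hyw⟩, fun hyx => hyv (hyx.trans_lt hxv)⟩
    have hvt : ∀ y ∈ tl, IncompRel (· ≤ ·) v y := by
      intro y hy
      obtain ⟨⟨w, hw, hyw⟩, hyv⟩ := (htl.2.1 y).1 hy
      refine ⟨fun hvy => (hv w hw).1 (hvy.trans hyw.le), fun hyv' => ?_⟩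
      rcases hyv'.lt_or_eq with h | rfl
      exacts [hyv h, (hv w hw).1 hyw.le]
    have hwo : ∀ x ∈ wl, ∀ w ∈ old, IncompRel (· ≤ ·) x w := by
      intro x hx w hw
      obtain ⟨hxv, hxD⟩ := (hwl.2.1 x).1 hx
      refine ⟨fun hxw => ?_, fun hwx => (hv w hw).2 (hwx.trans hxv.le)⟩
      rcases hxw.lt_or_eq with h | rfl
      exacts [hxD ⟨w, hw, h⟩, (hv x hw).2 hxv.le]
    refine ⟨u ++ wl ++ tl, by convert hS using 1; ext; simp, ?_⟩
    calc (v :: old).flatMap (fun w => tauStarOps w (lev w))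
        = tauStarOps v (lev v) ++ old.flatMap (fun w => tauStarOps w (lev w)) :=
          List.flatMap_cons ..
      OOpRel _ (tauStarOps v (u ++ wl) ++
          (etaInvOps (u ++ tl) ++ old.map OOp.T ++ etaOps (u ++ tl))) :=
          ((hlev v).oOpRel hDv [OOp.T v]).append (hrel.trans (hso.oOpRel hD _))
      OOpRel _ (etaInvOps (u ++ wl ++ tl) ++ (v :: old).map OOp.T ++ etaOps (u ++ wl ++ tl)) :=
          oOpRel_tauStarOps_append_conj hwt hvt hwo

theorem tauStar_comp_eq_eta_T_etaInv_general (C : S)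
    (vl : List P) (hvl : vl.Pairwise (fun a b => ¬ a ≤ b ∧ ¬ b ≤ a))
    (i : ℕ)
    (lev : P → List P) (hlev : ∀ w : P, IsLinearExtensionOn {x : P | x < w} (lev w))
    (leS : List P)
    (hleS : IsLinearExtensionOn {x : P | ∃ w ∈ vl.take i, x < w} leS)
    (f : P → S)
    (hL : OOpsDef C (((vl.take i).reverse).flatMap (fun w => tauStarOps w (lev w))) f) :
    applyOOps C (((vl.take i).reverse).flatMap (fun w => tauStarOps w (lev w))) f
      = applyOOps C
          (leS.map OOp.E ++ ((vl.take i).reverse).map OOp.T ++ (leS.reverse).map OOp.T)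
          f := by
  have hrs : ((vl.take i).reverse).Pairwise (IncompRel (· ≤ ·)) :=
    List.pairwise_reverse.2 ((hvl.sublist (List.take_sublist i vl)).imp IncompRel.symm)
  obtain ⟨s, hs, hrel⟩ := exists_isLinearExtensionOn_oOpRel_flatMap_tauStarOps lev hlev _ hrs
  have hleS' : IsLinearExtensionOn {x : P | ∃ w ∈ (vl.take i).reverse, x < w} leS := by
    simpa using hleS
  exact (OOpRel.isSoundRewrite (hrel.trans (hs.oOpRel hleS' _)) f hL).2.symm

/-- Let `v₁,…,v_k` be pairwise incomparable elements of `P` (listed in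
`vl`) and `1 ≤ i ≤ k`.  Then
`τ*_{v₁} ∘ τ*_{v₂} ∘ ⋯ ∘ τ*_{v_i} = η_{{v₁,…,v_i}} ∘ T_{v₁} ∘ T_{v₂} ∘ ⋯ ∘ T_{v_i} ∘ η_{{v₁,…,v_i}}⁻¹`
on all `S`-labelings for which both sides are defined.  Here `τ_w* = η_w ∘ T_w ∘ η_w⁻¹`
(realized by the operation sequence `tauStarOps w (lev w)` for a linear extension
`lev w` of `{x : x < w}`), and `η_{{v₁,…,v_i}} = T_{x₁} ∘ ⋯ ∘ T_{x_m}` for a linear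
extension `leS = (x₁,…,x_m)` of `{x ∈ P : x < w for some w ∈ {v₁,…,v_i}}`, with inverse
`E_{x_m} ∘ ⋯ ∘ E_{x₁}`.  The left side applies `τ*_{v_i}` first; the right side applies
`η⁻¹` (i.e. `E_{x₁}` first), then `T_{v_i},…,T_{v₁}`, then `η` (i.e. `T_{x_m}` first). -/
theorem tauStar_comp_eq_eta_T_etaInv (C : S) (hC : ∀ s : S, C * s = s * C)
    (vl : List P) (hvl : vl.Pairwise (fun a b => ¬ a ≤ b ∧ ¬ b ≤ a))
    (i : ℕ) (hi1 : 1 ≤ i) (hi2 : i ≤ vl.length)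
    (lev : P → List P) (hlev : ∀ w : P, IsLinearExtensionOn {x : P | x < w} (lev w))
    (leS : List P)
    (hleS : IsLinearExtensionOn {x : P | ∃ w ∈ vl.take i, x < w} leS)
    (f : P → S)
    (hL : OOpsDef C (((vl.take i).reverse).flatMap (fun w => tauStarOps w (lev w))) f)
    (hR : OOpsDef C
      (leS.map OOp.E ++ ((vl.take i).reverse).map OOp.T ++ (leS.reverse).map OOp.T) f) :
    applyOOps C (((vl.take i).reverse).flatMap (fun w => tauStarOps w (lev w))) f
      = applyOOps C
          (leS.map OOp.E ++ ((vl.take i).reverse).map OOp.T ++ (leS.reverse).map OOp.T)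
          f :=
  tauStar_comp_eq_eta_T_etaInv_general C vl hvl i lev hlev leS hleS f hL
end

section
/- Let P be a finite poset and (x₁, x₂, …, xₙ) any linear extension of P. Then noncommutative antichain rowmotion NAR = τ_{xₙ} ∘ ⋯ ∘ τ_{x₂} ∘ τ_{x₁} equals the composition ∇ ∘ Θ ∘ Δ⁻¹ of the noncommutative transfer maps: NAR(g) = ∇(Θ(Δ⁻¹(g))) for every S-labeling g of P for which both sides are defined (i.e., every element inverted in the computation is nonzero). -/
/-!
Noncommutative (skew field) antichain/order toggling and rowmotion on a finite poset `P`,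
with labels in a division ring `S` and a fixed central element `C`, following
Joseph–Roby, "Birational and noncommutative lifts of antichain toggling and rowmotion".
All maps are partial; definedness ("every element inverted in the computation is
nonzero") is recorded by explicit predicates.
-/

open Finset

attribute [local instance] Classical.propDecidable

variable {P : Type*} [Fintype P] [PartialOrder P] {S : Type*} [DivisionRing S]

/-- Apply the noncommutative antichain toggles `τ` along a list, first element first;
for a linear extension `l = (x₁,…,xₙ)` of `P` this is
`NAR = τ_{xₙ} ∘ ⋯ ∘ τ_{x₂} ∘ τ_{x₁}`, noncommutative antichain rowmotion. -/
noncomputable def applyNCTaus (C : S) (l : List P) (g : P → S) : P → S :=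
  l.foldl (fun h v => ncTau C v h) g

/-- Stepwise definedness of applying the antichain toggles `τ` along a list. -/
def ncTausDef (C : S) : List P → (P → S) → Prop
  | [], _ => True
  | v :: l, g => tauDenom g v ≠ 0 ∧ ncTausDef C l (ncTau C v g)

/-!
The maximal chains of `P̂` through `v` are exactly the chains `0̂ ⋖ ⋯ ⋖ v` followed by the chains
`v ⋖ ⋯ ⋖ 1̂`, so the element inverted by `τ_v` factors as
`(∑_{u ∈ P̂, u ⋖ v} (∇⁻¹g)(u)) · (Δ⁻¹g)(v)`. When `τ_v` is applied during rowmotion along a linear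
extension, the elements above `v` still carry their original labels, while those below `v`
already carry their final labels `∇ΘΔ⁻¹g`. Since `(Δ⁻¹g)(v)` only depends on the labels above `v`,
`(∇⁻¹g)(u)` only on the labels below `u`, and `∇⁻¹ ∘ ∇ = id`, the new label at `v` is
`C · ((Δ⁻¹g)(v))⁻¹ · (∑_{u ⋖ v} (ΘΔ⁻¹g)(u))⁻¹ = (∇ΘΔ⁻¹g)(v)`.
-/

namespace NCRowmotion

section CoverChains

variable {α : Type*} [PartialOrder α]

def IsUpChain (v : α) (L : List α) : Prop :=
  L.IsChain (· ⋖ ·) ∧ L.head? = some v ∧ ∀ y ∈ L.getLast?, IsMax y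

def IsDownChain (v : α) (L : List α) : Prop :=
  L.IsChain (· ⋖ ·) ∧ (∀ y ∈ L.head?, IsMin y) ∧ L.getLast? = some v

def IsMaxChainList (L : List α) : Prop :=
  L ≠ [] ∧ L.IsChain (· ⋖ ·) ∧ (∀ y ∈ L.head?, IsMin y) ∧ ∀ y ∈ L.getLast?, IsMax y

theorem pairwise_lt_of_isChain_covBy {L : List α} (h : L.IsChain (· ⋖ ·)) :
    L.Pairwise (· < ·) :=
  (h.imp fun _ _ => CovBy.lt).pairwise

theorem IsUpChain.le_of_mem {v x : α} {L : List α} (h : IsUpChain v L) (hx : x ∈ L) :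
    v ≤ x := by
  obtain ⟨t, rfl⟩ := List.head?_eq_some_iff.mp h.2.1
  rcases List.mem_cons.mp hx with rfl | hx
  · exact le_rfl
  · exact ((List.pairwise_cons.mp (pairwise_lt_of_isChain_covBy h.1)).1 x hx).le

theorem IsDownChain.le_of_mem {v x : α} {L : List α} (h : IsDownChain v L) (hx : x ∈ L) :
    x ≤ v := by
  obtain ⟨t, rfl⟩ := List.getLast?_eq_some_iff.mp h.2.2
  rcases List.mem_append.mp hx with hx | hx
  · exact ((List.pairwise_append.mp (pairwise_lt_of_isChain_covBy h.1)).2.2 x hx v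
      (List.mem_singleton_self v)).le
  · exact (List.mem_singleton.mp hx).le

theorem isDownChain_concat_iff {v : α} {M : List α} :
    IsDownChain v (M ++ [v]) ↔ (M = [] ∧ IsMin v) ∨ ∃ u, u ⋖ v ∧ IsDownChain u M := by
  rcases List.eq_nil_or_concat' M with rfl | ⟨M, u, rfl⟩
  · simp [IsDownChain]
  · simp [IsDownChain, List.isChain_append, List.head?_append, and_comm, and_left_comm]

theorem isMaxChainList_append_iff {v : α} {M U : List α} (hU : U.head? = some v) :
    IsMaxChainList (M ++ U) ↔ IsDownChain v (M ++ [v]) ∧ IsUpChain v U := by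
  obtain ⟨U, rfl⟩ := List.head?_eq_some_iff.mp hU
  rw [IsMaxChainList, IsDownChain, IsUpChain, List.isChain_split]
  simp [List.head?_append, List.getLast?_append, and_assoc, and_comm, and_left_comm]

theorem IsDownChain.dropLast_concat {v : α} {L : List α} (h : IsDownChain v L) :
    L.dropLast ++ [v] = L := by
  obtain ⟨M, rfl⟩ := List.getLast?_eq_some_iff.mp h.2.2
  rw [List.dropLast_concat]

end CoverChains

section BoundedLists

variable (α : Type*) [Fintype α]

noncomputable def boundedLists : Finset (List α) :=
  (range (Fintype.card α + 1)).biUnion fun n => univ.image (List.ofFn : (Fin n → α) → List α)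

variable {α}

theorem mem_boundedLists {L : List α} : L ∈ boundedLists α ↔ L.length ≤ Fintype.card α := by
  simp only [boundedLists, mem_biUnion, mem_range, mem_image, mem_univ, true_and,
    Nat.lt_succ_iff]
  constructor
  · rintro ⟨n, hn, c, rfl⟩
    simpa using hn
  · exact fun hL => ⟨L.length, hL, L.get, List.ofFn_get L⟩

theorem mem_boundedLists_of_isChain [PartialOrder α] {L : List α} (h : L.IsChain (· ⋖ ·)) :
    L ∈ boundedLists α :=
  mem_boundedLists.mpr (pairwise_lt_of_isChain_covBy h).nodup.length_le_card

theorem sum_range_card_sum_ofFn {M : Type*} [AddCommMonoid M] (p : List α → Prop) (hp : ¬ p [])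
    (w : List α → M) :
    ∑ k ∈ range (Fintype.card α),
        ∑ c ∈ univ.filter (fun c : Fin (k + 1) → α => p (List.ofFn c)), w (List.ofFn c)
      = ∑ L ∈ (boundedLists α).filter p, w L := by
  have hdisj : (range (Fintype.card α + 1) : Set ℕ).PairwiseDisjoint
      fun n => (univ.image (List.ofFn : (Fin n → α) → List α)).filter p := by
    intro m _ n _ hmn
    refine disjoint_left.mpr fun L hm hn => hmn ?_
    simp only [mem_filter, mem_image, mem_univ, true_and] at hm hn
    obtain ⟨⟨c, rfl⟩, -⟩ := hm
    obtain ⟨⟨c', hc'⟩, -⟩ := hn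
    simpa using (congrArg List.length hc').symm
  rw [boundedLists, filter_biUnion, sum_biUnion hdisj, sum_range_succ']
  simp only [filter_image, sum_image fun _ _ _ _ h => List.ofFn_injective h]
  simp [List.ofFn_zero, hp]

end BoundedLists

theorem satChain_iff_isChain_ofFn {α : Type*} [PartialOrder α] {k : ℕ} (c : Fin (k + 1) → α) :
    SatChain c ↔ (List.ofFn c).IsChain (· ⋖ ·) := by
  rw [List.isChain_ofFn, SatChain]
  exact ⟨fun h i hi => h ⟨i, by omega⟩, fun h i => h i (by omega)⟩

theorem head?_ofFn_succ {α : Type*} {k : ℕ} (c : Fin (k + 1) → α) :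
    (List.ofFn c).head? = some (c 0) := by
  rw [List.ofFn_succ, List.head?_cons]

theorem getLast?_ofFn_succ {α : Type*} {k : ℕ} (c : Fin (k + 1) → α) :
    (List.ofFn c).getLast? = some (c (Fin.last k)) := by
  rw [List.getLast?_eq_some_getLast (by simp), List.getLast_ofFn]
  rfl

def revProd {α M : Type*} [Monoid M] (f : α → M) (L : List α) : M :=
  ((L.map f).reverse).prod

theorem revProd_concat {α M : Type*} [Monoid M] (f : α → M) (L : List α) (v : α) :
    revProd f (L ++ [v]) = f v * revProd f L := by
  simp [revProd]

theorem revProd_congr {α M : Type*} [Monoid M] {f f' : α → M} {L : List α}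
    (h : ∀ x ∈ L, f x = f' x) : revProd f L = revProd f' L := by
  rw [revProd, revProd, List.map_congr_left h]

theorem ncDeltaInv_eq_sum (f : P → S) (v : P) :
    ncDeltaInv f v = ∑ L ∈ (boundedLists P).filter (IsUpChain v), revProd f L := by
  rw [← sum_range_card_sum_ofFn _ (by simp [IsUpChain])]
  refine sum_congr rfl fun k _ => sum_congr (filter_congr fun c _ => ?_) fun c _ => ?_
  · simp only [IsUpChain, ← satChain_iff_isChain_ofFn, head?_ofFn_succ, getLast?_ofFn_succ,
      Option.mem_def, Option.some.injEq, forall_eq']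
  · rw [revProd, List.map_ofFn]

theorem ncNablaInv_eq_sum (f : P → S) (v : P) :
    ncNablaInv f v = ∑ L ∈ (boundedLists P).filter (IsDownChain v), revProd f L := by
  rw [← sum_range_card_sum_ofFn _ (by simp [IsDownChain])]
  refine sum_congr rfl fun k _ => sum_congr (filter_congr fun c _ => ?_) fun c _ => ?_
  · simp only [IsDownChain, ← satChain_iff_isChain_ofFn, head?_ofFn_succ, getLast?_ofFn_succ,
      Option.mem_def, Option.some.injEq, forall_eq']
  · rw [revProd, List.map_ofFn]

theorem tauDenom_eq_sum (f : P → S) (v : P) :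
    tauDenom f v = ∑ L ∈ (boundedLists P).filter IsMaxChainList,
      ∑ j ∈ (range L.length).filter (fun j => L[j]? = some v),
        revProd f (L.take j) * revProd f (L.drop j) := by
  rw [← sum_range_card_sum_ofFn _ (by simp [IsMaxChainList])]
  refine sum_congr rfl fun k _ => sum_congr (filter_congr fun c _ => ?_) fun c _ => ?_
  · simp only [IsMaxChainList, MaxChain, ← satChain_iff_isChain_ofFn, head?_ofFn_succ,
      getLast?_ofFn_succ, Option.mem_def, Option.some.injEq, forall_eq', ne_eq,
      List.ofFn_eq_nil_iff, Nat.add_one_ne_zero, not_false_eq_true, true_and]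
  · rw [sum_filter, sum_filter, List.length_ofFn, ← Fin.sum_univ_eq_sum_range]
    refine sum_congr rfl fun j _ => ?_
    simp only [revProd, List.map_take, List.map_drop, List.map_ofFn, List.getElem?_ofFn,
      Fin.is_lt, Fin.eta, dite_true, Option.some.injEq]

theorem lSum_ncNablaInv_eq_sum (f : P → S) (v : P) :
    lSum (ncNablaInv f) v
      = ∑ M ∈ (boundedLists P).filter (fun M => IsDownChain v (M ++ [v])), revProd f M := by
  set B := boundedLists P
  have hsplit : B.filter (fun M => IsDownChain v (M ++ [v]))
      = B.filter (fun M => M = [] ∧ IsMin v) ∪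
          (univ.filter (· ⋖ v)).biUnion fun u => B.filter (IsDownChain u) := by
    ext M
    simp only [mem_filter, mem_union, mem_biUnion, mem_univ, true_and, isDownChain_concat_iff]
    tauto
  have hdisj : Disjoint (B.filter (fun M => M = [] ∧ IsMin v))
      ((univ.filter (· ⋖ v)).biUnion fun u => B.filter (IsDownChain u)) := by
    simp only [disjoint_left, mem_filter, mem_biUnion, and_imp]
    rintro M - rfl - ⟨u, -, -, -, -, hu⟩
    simp at hu
  have hdisj' : (univ.filter (· ⋖ v) : Set P).PairwiseDisjoint
      fun u => B.filter (IsDownChain u) := by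
    intro a _ b _ hab
    refine disjoint_left.mpr fun L ha hb => hab ?_
    exact Option.some.inj ((mem_filter.mp ha).2.2.2.symm.trans (mem_filter.mp hb).2.2.2)
  have hnil : ([] : List P) ∈ B := mem_boundedLists.mpr (Nat.zero_le _)
  rw [hsplit, sum_union hdisj, sum_biUnion hdisj', lSum]
  congr 1
  · by_cases hmin : IsMin v <;> simp [hmin, sum_filter, hnil, revProd]
  · exact sum_congr rfl fun u _ => ncNablaInv_eq_sum f u

theorem ncNablaInv_eq_mul_lSum (f : P → S) (v : P) :
    ncNablaInv f v = f v * lSum (ncNablaInv f) v := by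
  rw [ncNablaInv_eq_sum, lSum_ncNablaInv_eq_sum, mul_sum]
  refine sum_nbij' List.dropLast (· ++ [v]) (fun L hL => ?_) (fun M hM => ?_)
    (fun L hL => (mem_filter.mp hL).2.dropLast_concat) (fun M _ => List.dropLast_concat)
    (fun L hL => ?_)
  · obtain ⟨hLB, hL⟩ := mem_filter.mp hL
    refine mem_filter.mpr ⟨mem_boundedLists.mpr ?_, hL.dropLast_concat.symm ▸ hL⟩
    exact (List.dropLast_prefix L).length_le.trans (mem_boundedLists.mp hLB)
  · have hM := (mem_filter.mp hM).2
    exact mem_filter.mpr ⟨mem_boundedLists_of_isChain hM.1, hM⟩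
  · rw [← revProd_concat, (mem_filter.mp hL).2.dropLast_concat]

theorem tauDenom_eq_lSum_mul_ncDeltaInv (f : P → S) (v : P) :
    tauDenom f v = lSum (ncNablaInv f) v * ncDeltaInv f v := by
  rw [tauDenom_eq_sum, lSum_ncNablaInv_eq_sum, ncDeltaInv_eq_sum, sum_mul_sum,
    ← sum_product', sum_sigma']
  refine sum_nbij' (fun x => (x.1.take x.2, x.1.drop x.2)) (fun p => ⟨p.1 ++ p.2, p.1.length⟩)
    (fun x hx => ?_) (fun p hp => ?_) (fun x hx => ?_) (fun p _ => ?_) (fun _ _ => rfl)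
  · obtain ⟨L, j⟩ := x
    simp only [mem_sigma, mem_filter, mem_range] at hx
    obtain ⟨⟨hLB, hL⟩, hj, hjv⟩ := hx
    rw [← List.head?_drop] at hjv
    rw [← List.take_append_drop j L, isMaxChainList_append_iff hjv] at hL
    have hlen := mem_boundedLists.mp hLB
    simp only [mem_product, mem_filter, mem_boundedLists]
    exact ⟨⟨(List.take_prefix j L).length_le.trans hlen, hL.1⟩,
      ⟨(List.drop_suffix j L).length_le.trans hlen, hL.2⟩⟩
  · obtain ⟨M, U⟩ := p
    simp only [mem_product, mem_filter] at hp
    obtain ⟨⟨-, hM⟩, -, hU⟩ := hp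
    have hMU := (isMaxChainList_append_iff hU.2.1).mpr ⟨hM, hU⟩
    simp only [mem_sigma, mem_filter, mem_range]
    refine ⟨⟨mem_boundedLists_of_isChain hMU.2.1, hMU⟩, ?_, ?_⟩
    · have := List.length_pos_iff.mpr (List.ne_nil_of_mem (List.mem_of_mem_head? hU.2.1))
      simp only [List.length_append]
      omega
    · rw [List.getElem?_append_right le_rfl, Nat.sub_self, ← List.head?_eq_getElem?, hU.2.1]
  · obtain ⟨L, j⟩ := x
    have hj := (mem_range.mp (mem_filter.mp (mem_sigma.mp hx).2).1)
    simp [List.take_append_drop, List.length_take, hj.le]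
  · simp

theorem lSum_congr {f f' : P → S} {v : P} (h : ∀ u, u ⋖ v → f u = f' u) :
    lSum f v = lSum f' v := by
  rw [lSum, lSum, sum_congr rfl fun u hu => h u (mem_filter.mp hu).2]

theorem ncDeltaInv_congr {f f' : P → S} {v : P} (h : ∀ x, v ≤ x → f x = f' x) :
    ncDeltaInv f v = ncDeltaInv f' v := by
  simp only [ncDeltaInv_eq_sum]
  exact sum_congr rfl fun L hL =>
    revProd_congr fun x hx => h x ((mem_filter.mp hL).2.le_of_mem hx)

theorem ncNablaInv_congr {f f' : P → S} {v : P} (h : ∀ x, x ≤ v → f x = f' x) :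
    ncNablaInv f v = ncNablaInv f' v := by
  simp only [ncNablaInv_eq_sum]
  exact sum_congr rfl fun L hL =>
    revProd_congr fun x hx => h x ((mem_filter.mp hL).2.le_of_mem hx)

theorem ncNablaInv_ncNabla {F : P → S} (hF : ∀ x, lSum F x ≠ 0) :
    ncNablaInv (ncNabla F) = F := by
  funext v
  induction v using WellFoundedLT.induction with
  | _ v ih =>
    rw [ncNablaInv_eq_mul_lSum, lSum_congr fun u huv => ih u huv.lt, ncNabla, mul_assoc,
      inv_mul_cancel₀ (hF v), mul_one]

theorem ncTau_apply_self (C : S) (v : P) (h : P → S) :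
    ncTau C v h v = C * (ncDeltaInv h v)⁻¹ * (lSum (ncNablaInv h) v)⁻¹ := by
  simp only [ncTau, if_true]
  rw [tauDenom_eq_lSum_mul_ncDeltaInv, mul_inv_rev, mul_assoc]

theorem ncTau_apply_of_ne (C : S) {v x : P} (h : P → S) (hx : x ≠ v) : ncTau C v h x = h x :=
  if_neg hx

theorem ncTau_apply_self_eq_ncNabla {C : S} {g h : P → S} {v : P}
    (hF : ∀ x, lSum (ncTheta C (ncDeltaInv g)) x ≠ 0)
    (hge : ∀ x, v ≤ x → h x = g x)
    (hlt : ∀ x, x < v → h x = ncNabla (ncTheta C (ncDeltaInv g)) x) :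
    ncTau C v h v = ncNabla (ncTheta C (ncDeltaInv g)) v := by
  have hup : ncDeltaInv h v = ncDeltaInv g v := ncDeltaInv_congr hge
  have hdown : lSum (ncNablaInv h) v = lSum (ncTheta C (ncDeltaInv g)) v :=
    lSum_congr fun u huv => by
      rw [ncNablaInv_congr fun x hx => hlt x (hx.trans_lt huv.lt), ncNablaInv_ncNabla hF]
  rw [ncTau_apply_self, hup, hdown]
  rfl

theorem foldl_step_eq_of_upClosed {α β : Type*} [PartialOrder α] (step : α → (α → β) → α → β)
    {g T : α → β} (hstep_ne : ∀ v h x, x ≠ v → step v h x = h x)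
    (hstep : ∀ v h, (∀ x, v ≤ x → h x = g x) → (∀ x, x < v → h x = T x) → step v h v = T v) :
    ∀ (l : List α) (h : α → β), l.Nodup → l.Pairwise (fun a b => ¬ b < a) →
      (∀ x ∈ l, ∀ y, x ≤ y → y ∈ l) → (∀ x ∈ l, h x = g x) → (∀ x ∉ l, h x = T x) →
      l.foldl (fun h v => step v h) h = T
  | [], h, _, _, _, _, hT => funext fun x => hT x List.not_mem_nil
  | v :: l, h, hnd, hpw, hup, hg, hT => by
    obtain ⟨hvl, hnd⟩ := List.nodup_cons.mp hnd
    obtain ⟨hnlt, hpw⟩ := List.pairwise_cons.mp hpw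
    have hne : ∀ x ∈ l, x ≠ v := fun x hx hxv => hvl (hxv ▸ hx)
    refine foldl_step_eq_of_upClosed step hstep_ne hstep l (step v h) hnd hpw
      (fun x hx y hxy => ?_) (fun x hx => ?_) (fun x hx => ?_)
    · rcases List.mem_cons.mp (hup x (List.mem_cons_of_mem v hx) y hxy) with rfl | hy
      · exact absurd (lt_of_le_of_ne hxy (hne x hx)) (hnlt x hx)
      · exact hy
    · rw [hstep_ne v h x (hne x hx), hg x (List.mem_cons_of_mem v hx)]
    · by_cases hxv : x = v
      · subst hxv
        refine hstep x h (fun y hy => hg y (hup x List.mem_cons_self y hy)) fun y hy => ?_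
        refine hT y fun hmem => ?_
        rcases List.mem_cons.mp hmem with rfl | hyl
        · exact lt_irrefl y hy
        · exact hnlt y hyl hy
      · rw [hstep_ne v h x hxv]
        exact hT x fun hmem => (List.mem_cons.mp hmem).elim hxv hx

end NCRowmotion

theorem IsLinearExtension.pairwise {α : Type*} [PartialOrder α] {l : List α}
    (hl : IsLinearExtension l) : l.Pairwise (fun a b => ¬ b < a) :=
  List.pairwise_iff_getElem.mpr fun i j hi hj hij hlt => absurd (hl.2.2 j i hj hi hlt) (by omega)

open NCRowmotion

theorem NAR_eq_nabla_theta_deltaInv_general (C : S)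
    (l : List P) (hl : IsLinearExtension l) (g : P → S)
    (hdefNabla : ∀ x : P, lSum (ncTheta C (ncDeltaInv g)) x ≠ 0) :
    applyNCTaus C l g = ncNabla (ncTheta C (ncDeltaInv g)) :=
  foldl_step_eq_of_upClosed (ncTau C) (fun _ h _ hx => ncTau_apply_of_ne C h hx)
    (fun _ _ hge hlt => ncTau_apply_self_eq_ncNabla hdefNabla hge hlt) l g hl.1 hl.pairwise
    (fun _ _ y _ => hl.2.1 y) (fun _ _ => rfl) fun x hx => absurd (hl.2.1 x) hx

/-- For any linear extension `(x₁,…,xₙ)` of `P`, noncommutative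
antichain rowmotion `NAR = τ_{xₙ} ∘ ⋯ ∘ τ_{x₂} ∘ τ_{x₁}` (with `τ_{x₁}` applied first)
equals the composition `∇ ∘ Θ ∘ Δ⁻¹` of the noncommutative transfer maps, on every
`S`-labeling for which both sides are defined. -/
theorem NAR_eq_nabla_theta_deltaInv (C : S) (hC : ∀ s : S, C * s = s * C)
    (l : List P) (hl : IsLinearExtension l) (g : P → S)
    (hdefL : ncTausDef C l g)
    (hdefTheta : ∀ x : P, ncDeltaInv g x ≠ 0)
    (hdefNabla : ∀ x : P, lSum (ncTheta C (ncDeltaInv g)) x ≠ 0) :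
    applyNCTaus C l g = ncNabla (ncTheta C (ncDeltaInv g)) :=
  NAR_eq_nabla_theta_deltaInv_general C l hl g hdefNabla
end
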